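/- arXiv:2602.13619 — 6 statements merged into one kernel-verified Lean document; each statement's English description precedes it below -/
import Mathlib

section
/- Let W be the q-ary symmetric channel with diagonal entry v and off-diagonal entry u, where v = 1 − (q−1)u and v > u. Then for any two distributions P₀, P₁ on the common alphabet of size q supported on two points {x₁, x₂} with P₀(x₁) > P₁(x₁) > 0, the ratio D_∞(Q₀‖Q₁)/D_∞(P₀‖P₁) of order-∞ Rényi divergences of the output distributions to the input distributions is at most (v−u)/v. -/
/-!
The symmetric channel acts on input probabilities by the affine map `p ↦ u + (v - u) p`, so for
inputs supported on `{x₁, x₂}` both suprema of likelihood ratios are attained at `x₁`, and the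
claim becomes `v log ((u + t a) / (u + t b)) ≤ t log (a / b)` with `t = v - u`, `a = P₀ x₁`,
`b = P₁ x₁`. Writing both logarithms as integrals over `[b, a]`, this follows from the pointwise
bound `v / (u + t x) ≤ 1 / x`, valid for `0 < x ≤ 1`.
-/

open Finset Real

lemma sum_mul_ite_eq_add_mul {X : Type*} [Fintype X] [DecidableEq X] (u v : ℝ) (P : X → ℝ)
    (hP : ∑ x, P x = 1) (y : X) :
    ∑ x, P x * (if y = x then v else u) = u + (v - u) * P y := by
  calc ∑ x, P x * (if y = x then v else u)
      = ∑ x, (u * P x + if y = x then (v - u) * P x else 0) :=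
        sum_congr rfl fun x _ => by split_ifs <;> ring
    _ = u + (v - u) * P y := by
        rw [sum_add_distrib, ← mul_sum, hP, mul_one, sum_ite_eq, if_pos (mem_univ y)]

lemma div_le_div_of_num_le_den_of_den_le_num {p q a b : ℝ} (hq : 0 ≤ q) (hpq : p ≤ q) (hb : 0 < b)
    (hba : b ≤ a) : p / q ≤ a / b :=
  (div_le_one_of_le₀ hpq hq).trans ((one_le_div₀ hb).2 hba)

lemma sup'_div_eq_of_le {X : Type*} [Fintype X] [Nonempty X] (f g : X → ℝ) (x₀ : X)
    (hg : ∀ y, 0 ≤ g y) (hfg : ∀ y, y ≠ x₀ → f y ≤ g y) (hg₀ : 0 < g x₀) (hgf₀ : g x₀ ≤ f x₀) :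
    univ.sup' univ_nonempty (fun y => f y / g y) = f x₀ / g x₀ := by
  refine le_antisymm (sup'_le _ _ fun y _ => ?_) (le_sup' (fun y => f y / g y) (mem_univ x₀))
  by_cases hy : y = x₀
  · rw [hy]
  · exact div_le_div_of_num_le_den_of_den_le_num (hg y) (hfg y hy) hg₀ hgf₀

lemma integral_inv_add_mul {u t a b : ℝ} (hu : 0 ≤ u) (ht : 0 < t) (ha : 0 < a) (hb : 0 < b) :
    ∫ x in b..a, (u + t * x)⁻¹ = t⁻¹ * log ((u + t * a) / (u + t * b)) := by
  rw [intervalIntegral.integral_comp_add_mul (fun x => x⁻¹) ht.ne',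
    integral_inv_of_pos (by positivity) (by positivity), smul_eq_mul]

lemma intervalIntegrable_inv_add_mul {u t a b : ℝ} (hu : 0 ≤ u) (ht : 0 < t) (ha : 0 < a)
    (hb : 0 < b) : IntervalIntegrable (fun x => (u + t * x)⁻¹) MeasureTheory.volume b a := by
  refine intervalIntegral.intervalIntegrable_inv (fun x hx => ?_) (by fun_prop)
  have : 0 < x := lt_of_lt_of_le (lt_min hb ha) hx.1
  positivity

lemma add_mul_inv_add_mul_le_inv {u t x : ℝ} (hu : 0 ≤ u) (ht : 0 < t) (hx : 0 < x)
    (hx1 : x ≤ 1) : (u + t) * (u + t * x)⁻¹ ≤ x⁻¹ := by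
  rw [← div_eq_mul_inv, div_le_iff₀ (by positivity), inv_mul_eq_div, le_div_iff₀ hx]
  nlinarith [mul_nonneg hu (sub_nonneg.2 hx1)]

lemma mul_log_div_add_mul_le {u t a b : ℝ} (hu : 0 ≤ u) (ht : 0 < t) (hb : 0 < b)
    (hba : b ≤ a) (ha1 : a ≤ 1) :
    (u + t) * log ((u + t * a) / (u + t * b)) ≤ t * log (a / b) := by
  have ha : 0 < a := hb.trans_le hba
  have hmono : ∫ x in b..a, (u + t) * (u + t * x)⁻¹ ≤ ∫ x in b..a, x⁻¹ :=
    intervalIntegral.integral_mono_on hba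
      ((intervalIntegrable_inv_add_mul hu ht ha hb).const_mul _)
      (by simpa using intervalIntegrable_inv_add_mul le_rfl one_pos ha hb)
      fun x hx => add_mul_inv_add_mul_le_inv hu ht (hb.trans_le hx.1) (hx.2.trans ha1)
  rw [intervalIntegral.integral_const_mul, integral_inv_add_mul hu ht ha hb,
    integral_inv_of_pos hb ha] at hmono
  calc (u + t) * log ((u + t * a) / (u + t * b))
      = t * ((u + t) * (t⁻¹ * log ((u + t * a) / (u + t * b)))) := by field_simp
    _ ≤ t * log (a / b) := mul_le_mul_of_nonneg_left hmono ht.le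

theorem stmt_2_general {X : Type*} [Fintype X] [DecidableEq X] [Nonempty X]
    (u v : ℝ) (hu : 0 ≤ u) (hvu : u < v)
    (x₁ x₂ : X) (hx : x₁ ≠ x₂)
    (P₀ P₁ : X → ℝ) (h0 : ∀ x, 0 ≤ P₀ x) (h1 : ∀ x, 0 ≤ P₁ x)
    (hs0 : ∑ x, P₀ x = 1) (hs1 : ∑ x, P₁ x = 1)
    (hsupp0 : ∀ x, x ≠ x₁ → x ≠ x₂ → P₀ x = 0)
    (hsupp1 : ∀ x, x ≠ x₁ → x ≠ x₂ → P₁ x = 0)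
    (horder : P₁ x₁ < P₀ x₁) (hpos : 0 < P₁ x₁) :
    Real.log (Finset.univ.sup' Finset.univ_nonempty fun y =>
        (∑ x, P₀ x * (if y = x then v else u)) / (∑ x, P₁ x * (if y = x then v else u)))
      / Real.log (max (P₀ x₁ / P₁ x₁) (P₀ x₂ / P₁ x₂))
      ≤ (v - u) / v := by
  have ht : 0 < v - u := sub_pos.2 hvu
  have hpair0 := Fintype.sum_eq_add x₁ x₂ hx (fun x h => hsupp0 x h.1 h.2)
  have hpair1 := Fintype.sum_eq_add x₁ x₂ hx (fun x h => hsupp1 x h.1 h.2)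
  have hle : ∀ y, y ≠ x₁ → P₀ y ≤ P₁ y := fun y hy1 => by
    by_cases hy2 : y = x₂
    · subst hy2; linarith
    · rw [hsupp0 y hy1 hy2, hsupp1 y hy1 hy2]
  simp only [sum_mul_ite_eq_add_mul u v _ hs0, sum_mul_ite_eq_add_mul u v _ hs1]
  rw [sup'_div_eq_of_le _ _ x₁ (fun y => by have := h1 y; positivity)
      (fun y hy => by have := hle y hy; gcongr) (by positivity) (by gcongr),
    max_eq_left (div_le_div_of_num_le_den_of_den_le_num (h1 x₂) (hle x₂ hx.symm) hpos horder.le),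
    div_le_div_iff₀ (log_pos ((one_lt_div hpos).2 horder)) (hu.trans_lt hvu)]
  have key := mul_log_div_add_mul_le hu ht hpos horder.le (by linarith [h0 x₂])
  rw [add_sub_cancel] at key
  linarith

/-- For the q-ary symmetric channel W with diagonal v and off-diagonal u,
v = 1 − (q−1)u, v > u, and any two distributions P₀, P₁ supported on {x₁, x₂} with
P₀(x₁) > P₁(x₁) > 0, the ratio D_∞(Q₀‖Q₁)/D_∞(P₀‖P₁) of order-∞ Rényi divergences of
the output distributions to the input distributions is at most (v−u)/v. -/
theorem stmt_2 {X : Type*} [Fintype X] [DecidableEq X] [Nonempty X]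
    (u v : ℝ) (hu : 0 ≤ u) (hv1 : v ≤ 1)
    (hqsym : v = 1 - ((Fintype.card X : ℝ) - 1) * u) (hvu : u < v)
    (x₁ x₂ : X) (hx : x₁ ≠ x₂)
    (P₀ P₁ : X → ℝ) (h0 : ∀ x, 0 ≤ P₀ x) (h1 : ∀ x, 0 ≤ P₁ x)
    (hs0 : ∑ x, P₀ x = 1) (hs1 : ∑ x, P₁ x = 1)
    (hsupp0 : ∀ x, x ≠ x₁ → x ≠ x₂ → P₀ x = 0)
    (hsupp1 : ∀ x, x ≠ x₁ → x ≠ x₂ → P₁ x = 0)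
    (horder : P₁ x₁ < P₀ x₁) (hpos : 0 < P₁ x₁) :
    Real.log (Finset.univ.sup' Finset.univ_nonempty fun y =>
        (∑ x, P₀ x * (if y = x then v else u)) / (∑ x, P₁ x * (if y = x then v else u)))
      / Real.log (max (P₀ x₁ / P₁ x₁) (P₀ x₂ / P₁ x₂))
      ≤ (v - u) / v :=
  stmt_2_general u v hu hvu x₁ x₂ hx P₀ P₁ h0 h1 hs0 hs1 hsupp0 hsupp1 horder hpos
end

section
/- Let W be the q-ary symmetric channel with diagonal entry v and off-diagonal entry u (v = 1 − (q−1)u, v > u). For any p₀ > p₁ in (0,1], the ratio (log f(p₀) − log f(p₁)) / (log p₀ − log p₁), where f(p) = u + p(v−u), is at most (v−u)/v. -/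
/-!
Put `t = p₁ / p₀` and `c = (v - u) / v`. Since `R(p) = p (v - u) / f(p)` increases on `[0, 1]`,
`f(p₁) / f(p₀) = 1 - R(p₀) (1 - t) ≥ 1 - c (1 - t)`, and Bernoulli's inequality for the exponent
`c ∈ [0, 1]` bounds the right-hand side below by `t ^ c`. Taking logarithms gives the claim.
-/

open Real

theorem mul_log_le_log_one_add_mul_sub_one {t c : ℝ} (ht : 0 < t) (hc₀ : 0 ≤ c) (hc₁ : c ≤ 1) :
    c * log t ≤ log (1 + c * (t - 1)) := by
  rw [← log_rpow ht]
  refine log_le_log (rpow_pos_of_pos ht c) ?_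
  simpa using rpow_one_add_le_one_add_mul_self (s := t - 1) (by linarith) hc₀ hc₁

theorem log_add_mul_sub_log_add_mul_le {u w p₀ p₁ : ℝ} (hu : 0 ≤ u) (hw : 0 ≤ w)
    (huw : 0 < u + w) (hp₁ : 0 < p₁) (hp : p₁ ≤ p₀) (hp₀ : p₀ ≤ 1) :
    log (u + p₀ * w) - log (u + p₁ * w) ≤ w / (u + w) * (log p₀ - log p₁) := by
  set c := w / (u + w)
  have hc₀ : 0 ≤ c := div_nonneg hw huw.le
  have hc₁ : c ≤ 1 := (div_le_one huw).2 (by linarith)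
  have hpos : ∀ p, 0 < p → p ≤ 1 → 0 < u + p * w := fun p hp0 hp1 => by
    nlinarith [mul_pos hp0 huw, mul_nonneg hu (sub_nonneg.2 hp1)]
  have hp₀' : 0 < p₀ := hp₁.trans_le hp
  have hf₀ := hpos p₀ hp₀' hp₀
  have hf₁ := hpos p₁ hp₁ (hp.trans hp₀)
  have ht : 0 < p₁ / p₀ := div_pos hp₁ hp₀'
  have hratio : 1 + c * (p₁ / p₀ - 1) ≤ (u + p₁ * w) / (u + p₀ * w) := by
    rw [le_div_iff₀ hf₀]
    simp only [c]
    field_simp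
    nlinarith [mul_nonneg (mul_nonneg hu hw) (mul_nonneg (sub_nonneg.2 hp) (sub_nonneg.2 hp₀))]
  have ht₁ : p₁ / p₀ ≤ 1 := (div_le_one hp₀').2 hp
  have hbase : 0 < 1 + c * (p₁ / p₀ - 1) := by
    nlinarith [mul_le_mul_of_nonpos_right hc₁ (sub_nonpos.2 ht₁)]
  calc log (u + p₀ * w) - log (u + p₁ * w) = -log ((u + p₁ * w) / (u + p₀ * w)) := by
        rw [log_div hf₁.ne' hf₀.ne']; ring
    _ ≤ -log (1 + c * (p₁ / p₀ - 1)) := neg_le_neg (log_le_log hbase hratio)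
    _ ≤ -(c * log (p₁ / p₀)) := neg_le_neg (mul_log_le_log_one_add_mul_sub_one ht hc₀ hc₁)
    _ = c * (log p₀ - log p₁) := by
        rw [log_div hp₁.ne' hp₀'.ne']; ring

theorem stmt_3_general (u v : ℝ) (hu : 0 < u) (huv : u < v)
    (p₀ p₁ : ℝ) (hp₁ : 0 < p₁) (hp : p₁ < p₀) (hp₀ : p₀ ≤ 1) :
    (Real.log (u + p₀ * (v - u)) - Real.log (u + p₁ * (v - u))) /
      (Real.log p₀ - Real.log p₁) ≤ (v - u) / v := by
  have hlog : 0 < log p₀ - log p₁ := sub_pos.2 (log_lt_log hp₁ hp)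
  have key := log_add_mul_sub_log_add_mul_le hu.le (sub_nonneg.2 huv.le) (by linarith)
    hp₁ hp.le hp₀
  rw [add_sub_cancel] at key
  exact (div_le_iff₀ hlog).2 key

/-- For the q-ary symmetric channel function f(p) = u + p(v−u) with
u, v ∈ (0,1), v > u, and any 0 < p₁ < p₀ ≤ 1, the logarithmic mean-value ratio
(log f(p₀) − log f(p₁)) / (log p₀ − log p₁) is at most (v−u)/v. -/
theorem stmt_3 (u v : ℝ) (hu : 0 < u) (huv : u < v) (hv : v < 1)
    (p₀ p₁ : ℝ) (hp₁ : 0 < p₁) (hp : p₁ < p₀) (hp₀ : p₀ ≤ 1) :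
    (Real.log (u + p₀ * (v - u)) - Real.log (u + p₁ * (v - u))) /
      (Real.log p₀ - Real.log p₁) ≤ (v - u) / v :=
  stmt_3_general u v hu huv p₀ p₁ hp₁ hp hp₀
end

section
/- Let u, v > 0 with v > u, and define f(p) = u + p(v−u) on [0,1]. Then for any 0 < p₁ < p₀ < 1, the ratio [log(f(p₀)/f(1−p₀)) − log(f(p₁)/f(1−p₁))] / [log(p₀/(1−p₀)) − log(p₁/(1−p₁))] is at most (v−u)/(v+u). -/
/-!
Write `f p = u + p (v - u)`, `g p = log (p / (1 - p))` and `h p = log (f p / f (1 - p))`.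
Since `f p + f (1 - p) = u + v`, we get `h' = (v² - u²) / (f p f (1 - p))` and `g' = 1 / (p (1 - p))`,
and the identity `f p f (1 - p) = (u + v)² p (1 - p) + u v (1 - 2p)²` gives
`h' ≤ (v - u) / (v + u) · g'`. Cauchy's mean value theorem turns this into the bound on the ratio
of increments.
-/

open Real Set

theorem sub_div_sub_le_of_hasDerivAt_le_mul {f f' g g' : ℝ → ℝ} {a b c : ℝ} (hab : a < b)
    (hfc : ContinuousOn f (Icc a b)) (hff' : ∀ x ∈ Ioo a b, HasDerivAt f (f' x) x)
    (hgc : ContinuousOn g (Icc a b)) (hgg' : ∀ x ∈ Ioo a b, HasDerivAt g (g' x) x)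
    (hg'_pos : ∀ x ∈ Ioo a b, 0 < g' x) (hf'_le : ∀ x ∈ Ioo a b, f' x ≤ c * g' x) :
    (f b - f a) / (g b - g a) ≤ c := by
  have hg_pos : 0 < g b - g a := by
    obtain ⟨η, hη, hslope⟩ := exists_hasDerivAt_eq_slope g g' hab hgc hgg'
    have := hg'_pos η hη
    rw [hslope] at this
    exact (div_pos_iff_of_pos_right (sub_pos.mpr hab)).mp this
  obtain ⟨ξ, hξ, hcauchy⟩ := exists_ratio_hasDerivAt_eq_ratio_slope f f' hab hfc hff' g g' hgc hgg'
  rw [div_le_iff₀ hg_pos]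
  refine le_of_mul_le_mul_right ?_ (hg'_pos ξ hξ)
  calc (f b - f a) * g' ξ = (g b - g a) * f' ξ := hcauchy.symm
    _ ≤ (g b - g a) * (c * g' ξ) := mul_le_mul_of_nonneg_left (hf'_le ξ hξ) hg_pos.le
    _ = c * (g b - g a) * g' ξ := by ring

theorem hasDerivAt_log_affine_div_affine {a b x : ℝ} (h₀ : 0 < a + x * b)
    (h₁ : 0 < a + (1 - x) * b) :
    HasDerivAt (fun p => log ((a + p * b) / (a + (1 - p) * b)))
      (b * (2 * a + b) / ((a + x * b) * (a + (1 - x) * b))) x := by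
  have hnum : HasDerivAt (fun p => a + p * b) b x := by
    simpa using ((hasDerivAt_id x).mul_const b).const_add a
  have hden : HasDerivAt (fun p => a + (1 - p) * b) (-b) x := by
    simpa using (((hasDerivAt_id x).const_sub 1).mul_const b).const_add a
  have hquot : HasDerivAt (fun p => (a + p * b) / (a + (1 - p) * b))
      ((b * (a + (1 - x) * b) - (a + x * b) * -b) / (a + (1 - x) * b) ^ 2) x :=
    hnum.div hden h₁.ne'
  convert hquot.log (div_pos h₀ h₁).ne' using 1
  field_simp
  ring

theorem hasDerivAt_log_div_one_sub {x : ℝ} (h₀ : 0 < x) (h₁ : x < 1) :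
    HasDerivAt (fun p => log (p / (1 - p))) (1 / (x * (1 - x))) x := by
  simpa using hasDerivAt_log_affine_div_affine (a := 0) (b := 1) (x := x)
    (by simpa using h₀) (by simpa using h₁)

theorem add_sq_mul_mul_one_sub_le {u v : ℝ} (huv : 0 ≤ u * v) (x : ℝ) :
    (v + u) ^ 2 * (x * (1 - x)) ≤ (u + x * (v - u)) * (u + (1 - x) * (v - u)) := by
  have key : (u + x * (v - u)) * (u + (1 - x) * (v - u))
      = (v + u) ^ 2 * (x * (1 - x)) + u * v * (1 - 2 * x) ^ 2 := by ring
  rw [key]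
  exact le_add_of_nonneg_right (mul_nonneg huv (sq_nonneg _))

theorem mul_div_affine_mul_affine_le {u v x : ℝ} (hu : 0 < u) (huv : u ≤ v) (h₀ : 0 < x)
    (h₁ : x < 1) :
    (v - u) * (2 * u + (v - u)) / ((u + x * (v - u)) * (u + (1 - x) * (v - u)))
      ≤ (v - u) / (v + u) * (1 / (x * (1 - x))) := by
  have hv : 0 < v := hu.trans_le huv
  have hx : 0 < x * (1 - x) := mul_pos h₀ (sub_pos.mpr h₁)
  have hf : 0 < (u + x * (v - u)) * (u + (1 - x) * (v - u)) :=
    lt_of_lt_of_le (by positivity) (add_sq_mul_mul_one_sub_le (mul_pos hu hv).le x)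
  rw [div_mul_div_comm, mul_one, div_le_div_iff₀ hf (by positivity)]
  convert mul_le_mul_of_nonneg_left (add_sq_mul_mul_one_sub_le (mul_pos hu hv).le x)
    (sub_nonneg.mpr huv) using 1
  ring

/-- For u, v > 0 with v > u and f(p) = u + p(v−u), for any
0 < p₁ < p₀ < 1, the ratio
[log(f(p₀)/f(1−p₀)) − log(f(p₁)/f(1−p₁))] / [log(p₀/(1−p₀)) − log(p₁/(1−p₁))]
is at most (v−u)/(v+u). -/
theorem stmt_4 (u v : ℝ) (hu : 0 < u) (huv : u < v)
    (p₀ p₁ : ℝ) (h1 : 0 < p₁) (h2 : p₁ < p₀) (h3 : p₀ < 1) :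
    (Real.log ((u + p₀ * (v - u)) / (u + (1 - p₀) * (v - u))) -
        Real.log ((u + p₁ * (v - u)) / (u + (1 - p₁) * (v - u)))) /
      (Real.log (p₀ / (1 - p₀)) - Real.log (p₁ / (1 - p₁))) ≤ (v - u) / (v + u) := by
  have hunit : Icc p₁ p₀ ⊆ Ioo 0 1 := Icc_subset_Ioo h1 h3
  have hh : ∀ x ∈ Icc p₁ p₀, HasDerivAt (fun p => log ((u + p * (v - u)) / (u + (1 - p) * (v - u))))
      ((v - u) * (2 * u + (v - u)) / ((u + x * (v - u)) * (u + (1 - x) * (v - u)))) x := by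
    intro x hx
    obtain ⟨hx₀, hx₁⟩ := hunit hx
    exact hasDerivAt_log_affine_div_affine (by nlinarith) (by nlinarith)
  have hg : ∀ x ∈ Icc p₁ p₀, HasDerivAt (fun p => log (p / (1 - p))) (1 / (x * (1 - x))) x :=
    fun x hx => hasDerivAt_log_div_one_sub (hunit hx).1 (hunit hx).2
  refine sub_div_sub_le_of_hasDerivAt_le_mul h2
    (fun x hx => (hh x hx).continuousAt.continuousWithinAt)
    (fun x hx => hh x (Ioo_subset_Icc_self hx))
    (fun x hx => (hg x hx).continuousAt.continuousWithinAt)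
    (fun x hx => hg x (Ioo_subset_Icc_self hx)) (fun x hx => ?_) (fun x hx => ?_)
  · obtain ⟨hx₀, hx₁⟩ := hunit (Ioo_subset_Icc_self hx)
    exact one_div_pos.mpr (mul_pos hx₀ (sub_pos.mpr hx₁))
  · obtain ⟨hx₀, hx₁⟩ := hunit (Ioo_subset_Icc_self hx)
    exact mul_div_affine_mul_affine_le hu huv.le hx₀ hx₁
end

section
/- Let P₀, P₁ be distributions on a finite alphabet with common support and Chernoff information I_ch(P₀,P₁) = −min_{λ∈(0,1)} log Σ_x P₀(x)^λ P₁(x)^{1−λ} > 0. Let S_m = Σ_{j=1}^m log(P₁(X_j)/P₀(X_j)) with X_j i.i.d. ~ P₀. Then for any integers 0 < a < b, P(max_{a < m ≤ b} S_m > 0) ≤ exp(−a · I_ch(P₀,P₁)). -/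
/-!
For `λ ∈ (0, 1)` put `c = ∑ₓ P₀(x)^(1-λ) P₁(x)^λ = 𝔼 exp(λ L(X))`, where `L = log (P₁ / P₀)`;
weighted AM-GM gives `c ≤ 1`. The process `exp(λ S_m) / c^m` is a nonnegative martingale of
mean `1`, and on the event `S_m > 0` with `m > a` it exceeds `c^(-m) ≥ c^(-a)`. Doob's maximal
inequality therefore bounds the probability by `c^a`, and optimising over `λ` gives the
Chernoff exponent.
-/

open MeasureTheory ProbabilityTheory Finset Real

section ExpMartingale

variable {Ω : Type*} {mΩ : MeasurableSpace Ω} {μ : Measure Ω} {Z : ℕ → Ω → ℝ} {t c : ℝ}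

/-- `exp (t S_{n+1}) / c ^ (n+1)` with `S_m = ∑_{j<m} Z j`: the shift by one makes the next factor
depend only on `Z (n+1)`, which is independent of the natural filtration of `Z` at time `n`. -/
noncomputable def expMartingale (Z : ℕ → Ω → ℝ) (t c : ℝ) (n : ℕ) (ω : Ω) : ℝ :=
  exp (t * ∑ j ∈ range (n + 1), Z j ω) / c ^ (n + 1)

lemma expMartingale_succ (n : ℕ) (ω : Ω) :
    expMartingale Z t c (n + 1) ω = expMartingale Z t c n ω * (exp (t * Z (n + 1) ω) / c) := by
  simp only [expMartingale, sum_range_succ _ (n + 1), mul_add, exp_add, pow_succ]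
  ring

variable (hZ : ∀ j, Measurable (Z j))
include hZ

lemma indep_natural_comap_succ (hindep : iIndepFun Z μ) (n : ℕ) :
    Indep (Filtration.natural Z (fun j => (hZ j).stronglyMeasurable) n)
      (MeasurableSpace.comap (Z (n + 1)) inferInstance) μ :=
  indep_of_indep_of_le_right
    (indep_iSup_of_disjoint (fun j => (hZ j).comap_le) ((iIndepFun_iff_iIndep _ _ _).1 hindep)
      (S := Set.Iic n) (T := {n + 1}) (by simp))
    (le_iSup₂ (f := fun i (_ : i ∈ ({n + 1} : Set ℕ)) => MeasurableSpace.comap (Z i) _) (n + 1) rfl)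

lemma martingale_expMartingale [IsProbabilityMeasure μ] (hindep : iIndepFun Z μ)
    (hmgf : ∀ j, mgf (Z j) μ t = c) (hc : 0 < c) :
    Martingale (expMartingale Z t c)
      (Filtration.natural Z fun j => (hZ j).stronglyMeasurable) μ := by
  set 𝒢 := Filtration.natural Z fun j => (hZ j).stronglyMeasurable
  have hint_step (j : ℕ) : Integrable (fun ω => exp (t * Z j ω)) μ :=
    mgf_pos_iff.1 (hmgf j ▸ hc)
  have hint (n : ℕ) : Integrable (expMartingale Z t c n) μ := by
    unfold expMartingale
    simpa [Finset.sum_apply] using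
      (hindep.integrable_exp_mul_sum hZ (s := range (n + 1)) fun j _ => hint_step j).div_const
        (c ^ (n + 1))
  have hadapted : StronglyAdapted 𝒢 (expMartingale Z t c) := fun n => by
    have hZn (j : ℕ) (hj : j ∈ range (n + 1)) : Measurable[𝒢 n] (Z j) :=
      ((Filtration.stronglyAdapted_natural _ j).mono
        (𝒢.mono (Nat.lt_succ_iff.1 (mem_range.1 hj)))).measurable
    exact (((Finset.measurable_sum _ hZn).const_mul t).exp.div_const _).stronglyMeasurable
  refine martingale_nat hadapted hint fun n => ?_
  have hstep : Integrable (fun ω => exp (t * Z (n + 1) ω) / c) μ := (hint_step _).div_const c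
  have hmeas_step : StronglyMeasurable[MeasurableSpace.comap (Z (n + 1)) inferInstance]
      (fun ω => exp (t * Z (n + 1) ω) / c) :=
    (((Measurable.of_comap_le le_rfl).const_mul t).exp.div_const c).stronglyMeasurable
  have hcond : μ[fun ω => exp (t * Z (n + 1) ω) / c | 𝒢 n] =ᵐ[μ] fun _ => 1 := by
    refine (condExp_indep_eq (hZ _).comap_le (𝒢.le n) hmeas_step
      (indep_natural_comap_succ hZ hindep n).symm).trans (ae_of_all _ fun _ => ?_)
    rw [integral_div, ← mgf, hmgf, div_self hc.ne']
  have hsucc : expMartingale Z t c (n + 1)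
      = expMartingale Z t c n * fun ω => exp (t * Z (n + 1) ω) / c :=
    funext (expMartingale_succ n)
  have hpull := condExp_mul_of_stronglyMeasurable_left (hadapted n) (hsucc ▸ hint (n + 1)) hstep
  rw [hsucc]
  filter_upwards [hpull, hcond] with ω h1 h2
  rw [h1, Pi.mul_apply, h2, mul_one]

lemma integral_expMartingale [IsProbabilityMeasure μ] (hindep : iIndepFun Z μ)
    (hmgf : ∀ j, mgf (Z j) μ t = c) (hc : 0 < c) (n : ℕ) :
    ∫ ω, expMartingale Z t c n ω ∂μ = 1 := by
  have h := hindep.mgf_sum hZ (range (n + 1)) (t := t)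
  rw [prod_congr rfl fun j _ => hmgf j, prod_const, card_range] at h
  simp only [mgf, Finset.sum_apply] at h
  simp only [expMartingale, integral_div, h, div_self (pow_pos hc _).ne']

lemma measure_exists_sum_pos_le [IsProbabilityMeasure μ] (hindep : iIndepFun Z μ)
    (hmgf : ∀ j, mgf (Z j) μ t = c) (ht : 0 < t) (hc : 0 < c) (hc1 : c ≤ 1) (a b : ℕ) :
    μ {ω | ∃ m ∈ Ioc a b, 0 < ∑ j ∈ range m, Z j ω} ≤ ENNReal.ofReal (c ^ a) := by
  have hM := martingale_expMartingale hZ hindep hmgf hc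
  have hM_nonneg : 0 ≤ expMartingale Z t c := fun n ω => by
    unfold expMartingale; positivity
  set ε := Real.toNNReal (c ^ a)⁻¹
  set maxM := fun ω => (range (b - 1 + 1)).sup' nonempty_range_add_one
    fun k => expMartingale Z t c k ω
  have hsub : {ω | ∃ m ∈ Ioc a b, 0 < ∑ j ∈ range m, Z j ω} ⊆ {ω | (ε : ℝ) ≤ maxM ω} := by
    rintro ω ⟨m, hm, hpos⟩
    obtain ⟨ham, hmb⟩ := mem_Ioc.1 hm
    obtain ⟨k, rfl⟩ : ∃ k, m = k + 1 := ⟨m - 1, by omega⟩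
    refine le_trans ?_ (le_sup' (fun k => expMartingale Z t c k ω)
      (mem_range.2 (by omega : k < b - 1 + 1)))
    calc (ε : ℝ) = (c ^ a)⁻¹ := Real.coe_toNNReal _ (by positivity)
      _ ≤ 1 / c ^ (k + 1) := by
        rw [one_div]
        exact inv_anti₀ (pow_pos hc _) (pow_le_pow_of_le_one hc.le hc1 (by omega))
      _ ≤ expMartingale Z t c k ω :=
        div_le_div_of_nonneg_right (one_le_exp (mul_pos ht hpos).le) (pow_pos hc _).le
  have hdoob : (ε : ENNReal) * μ {ω | (ε : ℝ) ≤ maxM ω} ≤ 1 := by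
    refine (maximal_ineq hM.submartingale hM_nonneg (b - 1)).trans ?_
    rw [← ENNReal.ofReal_one, ← integral_expMartingale hZ hindep hmgf hc (b - 1)]
    exact ENNReal.ofReal_le_ofReal
      (setIntegral_le_integral (hM.integrable _) (ae_of_all _ (hM_nonneg _)))
  calc μ {ω | ∃ m ∈ Ioc a b, 0 < ∑ j ∈ range m, Z j ω} ≤ μ {ω | (ε : ℝ) ≤ maxM ω} :=
        measure_mono hsub
    _ ≤ (ε : ENNReal)⁻¹ := ENNReal.le_inv_iff_mul_le.2 (mul_comm (ε : ENNReal) _ ▸ hdoob)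
    _ = ENNReal.ofReal (c ^ a) := by
        change (ENNReal.ofReal (c ^ a)⁻¹)⁻¹ = _
        rw [ENNReal.ofReal_inv_of_pos (pow_pos hc a), inv_inv]

end ExpMartingale

lemma le_exp_mul_biInf {s : Set ℝ} {g : ℝ → ℝ} {q a : ℝ} (hq0 : 0 ≤ q) (hq1 : q ≤ 1) (ha : 0 ≤ a)
    (h : ∀ l ∈ s, q ≤ exp (a * g l)) : q ≤ exp (a * ⨅ l ∈ s, g l) := by
  rcases hq0.eq_or_lt with rfl | hq0
  · exact (exp_pos _).le
  have hlog := log_nonpos hq0.le hq1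
  rw [← log_le_iff_le_exp hq0, Real.mul_iInf_of_nonneg ha]
  refine Real.le_iInf (fun l => ?_) hlog
  rw [Real.mul_iInf_of_nonneg ha]
  exact Real.le_iInf (fun hl => (log_le_iff_le_exp hq0).2 (h l hl)) hlog

section FiniteAlphabet

variable {α : Type*} [Fintype α]

lemma sum_rpow_mul_rpow_le_one {P₀ P₁ : α → ℝ} (h0 : ∀ x, 0 ≤ P₀ x) (h1 : ∀ x, 0 ≤ P₁ x)
    (hs0 : ∑ x, P₀ x = 1) (hs1 : ∑ x, P₁ x = 1) {l : ℝ} (hl0 : 0 ≤ l) (hl1 : l ≤ 1) :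
    ∑ x, P₀ x ^ l * P₁ x ^ (1 - l) ≤ 1 :=
  calc ∑ x, P₀ x ^ l * P₁ x ^ (1 - l) ≤ ∑ x, (l * P₀ x + (1 - l) * P₁ x) :=
        sum_le_sum fun x _ => geom_mean_le_arith_mean2_weighted hl0 (sub_nonneg.2 hl1)
          (h0 x) (h1 x) (by ring)
    _ = 1 := by rw [sum_add_distrib, ← mul_sum, ← mul_sum, hs0, hs1]; ring

variable [MeasurableSpace α] [MeasurableSingletonClass α]
  {Ω : Type*} {mΩ : MeasurableSpace Ω} {μ : Measure Ω} [IsFiniteMeasure μ]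

lemma integral_comp_eq_sum {P : α → ℝ} (hP : ∀ x, 0 ≤ P x) {X : Ω → α} (hX : Measurable X)
    (hlaw : ∀ x, μ (X ⁻¹' {x}) = ENNReal.ofReal (P x)) (g : α → ℝ) :
    ∫ ω, g (X ω) ∂μ = ∑ x, P x * g x := by
  rw [← integral_map hX.aemeasurable (measurable_of_countable g).aestronglyMeasurable,
    integral_fintype (Integrable.of_finite)]
  refine sum_congr rfl fun x _ => ?_
  rw [measureReal_def, Measure.map_apply hX (measurableSet_singleton x), hlaw,
    ENNReal.toReal_ofReal (hP x), smul_eq_mul]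

lemma mgf_log_div_eq_sum_rpow {P₀ P₁ : α → ℝ} (h0 : ∀ x, 0 < P₀ x) (h1 : ∀ x, 0 < P₁ x) {X : Ω → α}
    (hX : Measurable X) (hlaw : ∀ x, μ (X ⁻¹' {x}) = ENNReal.ofReal (P₀ x)) (t : ℝ) :
    mgf (fun ω => log (P₁ (X ω) / P₀ (X ω))) μ t = ∑ x, P₀ x ^ (1 - t) * P₁ x ^ t := by
  rw [mgf, integral_comp_eq_sum (fun x => (h0 x).le) hX hlaw (fun x => exp (t * log (P₁ x / P₀ x)))]
  refine sum_congr rfl fun x _ => ?_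
  rw [mul_comm t, ← rpow_def_of_pos (div_pos (h1 x) (h0 x)), div_rpow (h1 x).le (h0 x).le,
    rpow_sub (h0 x), rpow_one]
  field_simp

end FiniteAlphabet

theorem stmt_11_general {Ω : Type*} {mΩ : MeasurableSpace Ω} (μ : Measure Ω) [IsProbabilityMeasure μ]
    {α : Type*} [Fintype α] [MeasurableSpace α] [MeasurableSingletonClass α]
    (P₀ P₁ : α → ℝ) (h0 : ∀ x, 0 < P₀ x) (h1 : ∀ x, 0 < P₁ x)
    (hs0 : ∑ x, P₀ x = 1) (hs1 : ∑ x, P₁ x = 1)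
    (Ich : ℝ)
    (hIch : Ich = -(⨅ l ∈ Set.Ioo (0 : ℝ) 1, Real.log (∑ x, P₀ x ^ l * P₁ x ^ (1 - l))))
    (Xs : ℕ → Ω → α) (hXmeas : ∀ j, Measurable (Xs j))
    (hindep : iIndepFun Xs μ)
    (hlaw : ∀ j x, μ (Xs j ⁻¹' {x}) = ENNReal.ofReal (P₀ x))
    (a b : ℕ) :
    μ {ω | ∃ m ∈ Finset.Ioc a b,
        0 < ∑ j ∈ Finset.range m, Real.log (P₁ (Xs j ω) / P₀ (Xs j ω))}
      ≤ ENNReal.ofReal (Real.exp (-(a : ℝ) * Ich)) := by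
  set Z : ℕ → Ω → ℝ := fun j ω => log (P₁ (Xs j ω) / P₀ (Xs j ω))
  have hZ (j : ℕ) : Measurable (Z j) :=
    (measurable_of_countable fun x => log (P₁ x / P₀ x)).comp (hXmeas j)
  have hZindep : iIndepFun Z μ :=
    hindep.comp (fun _ x => log (P₁ x / P₀ x)) fun _ => measurable_of_countable _
  have hα : (univ : Finset α).Nonempty := by
    obtain ⟨x, hx, -⟩ := exists_ne_zero_of_sum_ne_zero (hs0 ▸ one_ne_zero)
    exact ⟨x, hx⟩
  have hc (l : ℝ) : 0 < ∑ x, P₀ x ^ l * P₁ x ^ (1 - l) :=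
    sum_pos (fun x _ => mul_pos (rpow_pos_of_pos (h0 x) _) (rpow_pos_of_pos (h1 x) _)) hα
  have hbound (l : ℝ) (hl : l ∈ Set.Ioo (0 : ℝ) 1) :
      μ {ω | ∃ m ∈ Ioc a b, 0 < ∑ j ∈ range m, Z j ω}
        ≤ ENNReal.ofReal ((∑ x, P₀ x ^ l * P₁ x ^ (1 - l)) ^ a) := by
    refine measure_exists_sum_pos_le hZ hZindep (fun j => ?_) (sub_pos.2 hl.2) (hc l)
      (sum_rpow_mul_rpow_le_one (fun x => (h0 x).le) (fun x => (h1 x).le) hs0 hs1 hl.1.le hl.2.le)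
      a b
    rw [mgf_log_div_eq_sum_rpow h0 h1 (hXmeas j) (hlaw j), sub_sub_cancel]
  rw [hIch, neg_mul_neg, ← ofReal_measureReal]
  refine ENNReal.ofReal_le_ofReal (le_exp_mul_biInf measureReal_nonneg measureReal_le_one
    (Nat.cast_nonneg a) fun l hl => ?_)
  rw [exp_nat_mul, exp_log (hc l)]
  exact ENNReal.toReal_le_of_le_ofReal (pow_nonneg (hc l).le a) (hbound l hl)

/-- Let P₀, P₁ be distributions on a finite alphabet with common (full)
support and Chernoff information I_ch(P₀,P₁) = −min_{λ∈(0,1)} log Σ_x P₀(x)^λ P₁(x)^{1−λ} > 0.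
With S_m = Σ_{j=1}^m log(P₁(X_j)/P₀(X_j)), X_j i.i.d. ∼ P₀, for any integers 0 < a < b,
P(max_{a < m ≤ b} S_m > 0) ≤ exp(−a · I_ch(P₀,P₁)). -/
theorem stmt_11 {Ω : Type*} {mΩ : MeasurableSpace Ω} (μ : Measure Ω) [IsProbabilityMeasure μ]
    {α : Type*} [Fintype α] [MeasurableSpace α] [MeasurableSingletonClass α]
    (P₀ P₁ : α → ℝ) (h0 : ∀ x, 0 < P₀ x) (h1 : ∀ x, 0 < P₁ x)
    (hs0 : ∑ x, P₀ x = 1) (hs1 : ∑ x, P₁ x = 1)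
    (Ich : ℝ)
    (hIch : Ich = -(⨅ l ∈ Set.Ioo (0 : ℝ) 1, Real.log (∑ x, P₀ x ^ l * P₁ x ^ (1 - l))))
    (hIchpos : 0 < Ich)
    (Xs : ℕ → Ω → α) (hXmeas : ∀ j, Measurable (Xs j))
    (hindep : iIndepFun Xs μ)
    (hlaw : ∀ j x, μ (Xs j ⁻¹' {x}) = ENNReal.ofReal (P₀ x))
    (a b : ℕ) (ha : 0 < a) (hab : a < b) :
    μ {ω | ∃ m ∈ Finset.Ioc a b,
        0 < ∑ j ∈ Finset.range m, Real.log (P₁ (Xs j ω) / P₀ (Xs j ω))}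
      ≤ ENNReal.ofReal (Real.exp (-(a : ℝ) * Ich)) :=
  stmt_11_general (mΩ := mΩ) μ P₀ P₁ h0 h1 hs0 hs1 Ich hIch Xs hXmeas hindep hlaw a b
end

section
/- Fix a finite alphabet X, a channel column r : X → [0,∞), a nonconstant likelihood-ratio vector s : X → [m, M] with 0 < m < M, and a probability vector p on X. Define F(s, p) = log( E_p[r·s] / (E_p[r] E_p[s]) ). Then for fixed p with E_p[r] > 0, the function s ↦ F(s,p) on the box [m,M]^X attains its maximum at a vertex, i.e. at some s* with s*(x) ∈ {m, M} for every x. -/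
/-!
On the box `[m, M]^X` the map `s ↦ E_p[r s] / E_p[s]` is linear-fractional in each coordinate
separately, and a linear-fractional function of one variable is monotone on any interval where
its denominator stays positive. Moving the coordinates of any point of the box one at a time to
the better endpoint therefore never decreases the ratio, so some vertex dominates every point of
the box; among the finitely many vertices take the best one. Since `log` and division by
`E_p[r] > 0` are monotone, that vertex also maximizes `F(·, p)`.
-/

open Set Matrix Function

lemma add_mul_div_add_mul_le_max_of_mem_Icc {A a B b m M t : ℝ} (ht : t ∈ Icc m M)
    (hm : 0 < B + b * m) (hM : 0 < B + b * M) :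
    (A + a * t) / (B + b * t) ≤
      max ((A + a * m) / (B + b * m)) ((A + a * M) / (B + b * M)) := by
  obtain ⟨hmt, htM⟩ := ht
  have ht : 0 < B + b * t := by
    rcases le_total 0 b with hb | hb <;> nlinarith
  -- the sign of `a * B - A * b` decides whether the function increases or decreases in `t`
  rcases le_total 0 (a * B - A * b) with hD | hD
  · refine le_max_of_le_right ?_
    rw [div_le_div_iff₀ ht hM]
    nlinarith [mul_nonneg hD (sub_nonneg.2 htM)]
  · refine le_max_of_le_left ?_
    rw [div_le_div_iff₀ ht hm]
    nlinarith [mul_nonneg (neg_nonneg.2 hD) (sub_nonneg.2 hmt)]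

section Box

variable {X : Type*} [Fintype X]

lemma update_dotProduct [DecidableEq X] (s a : X → ℝ) (i : X) (t : ℝ) :
    update s i t ⬝ᵥ a = (s ⬝ᵥ a - s i * a i) + a i * t := by
  have : update s i t = s + Pi.single i (t - s i) := by
    ext x
    rcases eq_or_ne x i with rfl | hx <;> simp [*]
  rw [this, add_dotProduct, single_dotProduct]
  ring

lemma mul_sum_le_dotProduct {m : ℝ} {s w : X → ℝ} (hs : ∀ x, m ≤ s x) (hw : ∀ x, 0 ≤ w x) :
    m * ∑ x, w x ≤ s ⬝ᵥ w := by
  rw [Finset.mul_sum]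
  exact Finset.sum_le_sum fun x _ => mul_le_mul_of_nonneg_right (hs x) (hw x)

variable {m M : ℝ} {a b : X → ℝ}

lemma exists_endpoint_div_dotProduct_le_update [DecidableEq X]
    (hb : ∀ s ∈ univ.pi fun _ => Icc m M, 0 < s ⬝ᵥ b)
    {s : X → ℝ} (hs : s ∈ univ.pi fun _ => Icc m M) (i : X) :
    ∃ t ∈ ({m, M} : Set ℝ), s ⬝ᵥ a / s ⬝ᵥ b ≤ update s i t ⬝ᵥ a / update s i t ⬝ᵥ b := by
  have hbt : ∀ t ∈ Icc m M, 0 < (s ⬝ᵥ b - s i * b i) + b i * t := fun t ht => by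
    rw [← update_dotProduct]
    exact hb _ ((update_mem_pi_iff_of_mem hs).2 fun _ => ht)
  have hmM : m ≤ M := (hs i trivial).1.trans (hs i trivial).2
  have key := add_mul_div_add_mul_le_max_of_mem_Icc (A := s ⬝ᵥ a - s i * a i) (a := a i)
    (hs i trivial) (hbt m ⟨le_rfl, hmM⟩) (hbt M ⟨hmM, le_rfl⟩)
  rw [mul_comm (a i), mul_comm (b i), sub_add_cancel, sub_add_cancel] at key
  simp only [update_dotProduct]
  rcases le_max_iff.1 key with h | h
  · exact ⟨m, Or.inl rfl, h⟩
  · exact ⟨M, Or.inr rfl, h⟩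

lemma exists_mem_pi_endpoints_div_dotProduct_le (hb : ∀ s ∈ univ.pi fun _ => Icc m M, 0 < s ⬝ᵥ b)
    (T : Finset X) {s : X → ℝ} (hs : s ∈ univ.pi fun _ => Icc m M) :
    ∃ v ∈ univ.pi (fun _ => Icc m M), (∀ x ∈ T, v x ∈ ({m, M} : Set ℝ)) ∧
      s ⬝ᵥ a / s ⬝ᵥ b ≤ v ⬝ᵥ a / v ⬝ᵥ b := by
  classical
  induction T using Finset.induction_on with
  | empty => exact ⟨s, hs, by simp, le_rfl⟩
  | @insert i T hi ih =>
    obtain ⟨v, hv, hvT, hsv⟩ := ih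
    obtain ⟨t, ht, hvt⟩ := exists_endpoint_div_dotProduct_le_update (a := a) hb hv i
    have htIcc : t ∈ Icc m M := by
      have hmM : m ≤ M := (hv i trivial).1.trans (hv i trivial).2
      rcases ht with rfl | rfl
      exacts [⟨le_rfl, hmM⟩, ⟨hmM, le_rfl⟩]
    refine ⟨update v i t, (update_mem_pi_iff_of_mem hv).2 fun _ => htIcc, ?_, hsv.trans hvt⟩
    intro x hx
    rcases eq_or_ne x i with rfl | hxi
    · simpa using ht
    · simpa [hxi] using hvT x ((Finset.mem_insert.1 hx).resolve_left hxi)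

lemma exists_vertex_forall_div_dotProduct_le (hb : ∀ s ∈ univ.pi fun _ => Icc m M, 0 < s ⬝ᵥ b) :
    ∃ v ∈ univ.pi (fun _ => ({m, M} : Set ℝ)),
      ∀ s ∈ univ.pi fun _ => Icc m M, s ⬝ᵥ a / s ⬝ᵥ b ≤ v ⬝ᵥ a / v ⬝ᵥ b := by
  obtain ⟨v, hv, hmax⟩ := (univ.pi fun _ => ({m, M} : Set ℝ)).exists_max_image
    (fun v => v ⬝ᵥ a / v ⬝ᵥ b) (Finite.pi fun _ => toFinite _) ⟨fun _ => m, fun _ _ => Or.inl rfl⟩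
  refine ⟨v, hv, fun s hs => ?_⟩
  obtain ⟨w, -, hw, hsw⟩ := exists_mem_pi_endpoints_div_dotProduct_le (a := a) hb Finset.univ hs
  exact hsw.trans (hmax w fun x _ => hw x (Finset.mem_univ x))

end Box

theorem stmt_15_general {X : Type*} [Fintype X]
    (r : X → ℝ) (hr : ∀ x, 0 ≤ r x)
    (m M : ℝ) (hm : 0 < m)
    (p : X → ℝ) (hp : ∀ x, 0 ≤ p x) (hps : ∑ x, p x = 1)
    (hEr : 0 < ∑ x, r x * p x) :
    ∃ s' : X → ℝ, (∀ x, s' x = m ∨ s' x = M) ∧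
      ∀ s : X → ℝ, (∀ x, s x ∈ Set.Icc m M) →
        Real.log ((∑ x, r x * s x * p x) / ((∑ x, r x * p x) * (∑ x, s x * p x)))
          ≤ Real.log ((∑ x, r x * s' x * p x) / ((∑ x, r x * p x) * (∑ x, s' x * p x))) := by
  have hrp : ∀ s : X → ℝ, ∑ x, r x * s x * p x = s ⬝ᵥ fun x => r x * p x := fun s =>
    Finset.sum_congr rfl fun x _ => by ring
  have hD : ∀ s ∈ univ.pi fun _ => Icc m M, 0 < s ⬝ᵥ p := fun s hs => by
    have := mul_sum_le_dotProduct (fun x => (hs x trivial).1) hp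
    rw [hps, mul_one] at this
    linarith
  obtain ⟨v, hv, hmax⟩ := exists_vertex_forall_div_dotProduct_le (a := fun x => r x * p x) hD
  refine ⟨v, fun x => hv x trivial, fun s hs => ?_⟩
  have hN : 0 < s ⬝ᵥ fun x => r x * p x := lt_of_lt_of_le (mul_pos hm hEr)
    (mul_sum_le_dotProduct (fun x => (hs x).1) fun x => mul_nonneg (hr x) (hp x))
  simp only [hrp, mul_comm (∑ x, r x * p x), ← div_div]
  refine Real.log_le_log (div_pos (div_pos hN (hD s fun x _ => hs x)) hEr) ?_
  exact div_le_div_of_nonneg_right (hmax s fun x _ => hs x) hEr.le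

/-- For a finite alphabet X, nonnegative r : X → ℝ, 0 < m < M, and a
probability vector p with E_p[r] > 0, the function
s ↦ F(s,p) = log(E_p[r·s] / (E_p[r] E_p[s])) on the box [m,M]^X attains its maximum at
a vertex, i.e. at some s* with s*(x) ∈ {m, M} for every x. -/
theorem stmt_15 {X : Type*} [Fintype X] [Nonempty X]
    (r : X → ℝ) (hr : ∀ x, 0 ≤ r x)
    (m M : ℝ) (hm : 0 < m) (hmM : m < M)
    (p : X → ℝ) (hp : ∀ x, 0 ≤ p x) (hps : ∑ x, p x = 1)
    (hEr : 0 < ∑ x, r x * p x) :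
    ∃ s' : X → ℝ, (∀ x, s' x = m ∨ s' x = M) ∧
      ∀ s : X → ℝ, (∀ x, s x ∈ Set.Icc m M) →
        Real.log ((∑ x, r x * s x * p x) / ((∑ x, r x * p x) * (∑ x, s x * p x)))
          ≤ Real.log ((∑ x, r x * s' x * p x) / ((∑ x, r x * p x) * (∑ x, s' x * p x))) :=
  stmt_15_general r hr m M hm p hp hps hEr
end

section
/- Fix ρ ∈ (1, ∞), a channel W : X → Y between finite alphabets, and distributions P₀ ≪≫ P₁ on X. On the set S(P₀,P₁) = {P̂₁ probability on X : Σ_x (P₀(x)/P₁(x)) P̂₁(x) = 1}, define g(P̂₁) = Σ_y (Σ_x (P₀(x)/P₁(x)) P̂₁(x) W(y|x))^ρ (Σ_x P̂₁(x) W(y|x))^{1−ρ} − (Σ_x (P₀(x)/P₁(x))^ρ P̂₁(x))^λ for a fixed λ ∈ (0,1). Then g is a convex function of P̂₁ on S(P₀,P₁), and hence attains its maximum at an extreme point of S(P₀,P₁), which is supported on at most two atoms. -/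
/-!
With `c = P₀ / P₁`, each summand of `g` is `(a, b) ↦ a ^ ρ * b ^ (1 - ρ)`, the perspective
`b * (a / b) ^ ρ` of the convex function `t ↦ t ^ ρ`, evaluated at a pair of linear functions
of `q`; perspectives of convex functions are jointly convex, and the subtracted term is a concave
power of a linear function, so `g` is convex. It is continuous on the compact set `S`, so its
maximisers form a nonempty compact extreme subset of `S`, which contains an extreme point of `S`
by Krein–Milman. Finally `S` is cut out of the nonnegative orthant by two linear equations, so an
extreme point has at most two nonzero coordinates: on a larger support those equations leave a
nonzero direction along which the point can be moved both ways inside `S`.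
-/

open Set Filter Topology Module Real

-- On the wedge `b = 0` forces `a = 0`, so the junk value `0 ^ (1 - ρ) = 0` of `a ^ ρ * b ^ (1 - ρ)`
-- at `b = 0` agrees with the continuous extension of the perspective `b * (a / b) ^ ρ`.
def wedge (C : ℝ) : Set (ℝ × ℝ) := {p | 0 ≤ p.1 ∧ 0 ≤ p.2 ∧ p.1 ≤ C * p.2}

theorem convex_wedge (C : ℝ) : Convex ℝ (wedge C) := by
  rintro p ⟨hp₁, hp₂, hp⟩ q ⟨hq₁, hq₂, hq⟩ a b ha hb -
  simp only [wedge, mem_ofPred_eq, Prod.fst_add, Prod.snd_add, Prod.smul_fst, Prod.smul_snd,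
    smul_eq_mul]
  refine ⟨by positivity, by positivity, ?_⟩
  nlinarith [mul_le_mul_of_nonneg_left hp ha, mul_le_mul_of_nonneg_left hq hb]

namespace wedge

variable {C : ℝ} {p : ℝ × ℝ}

theorem fst_eq_zero_of_snd_eq_zero (hp : p ∈ wedge C) (h : p.2 = 0) : p.1 = 0 :=
  le_antisymm (by simpa [h] using hp.2.2) hp.1

theorem snd_mul_fst_div_snd (hp : p ∈ wedge C) : p.2 * (p.1 / p.2) = p.1 := by
  rcases eq_or_ne p.2 0 with h | h
  · simp [h, fst_eq_zero_of_snd_eq_zero hp h]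
  · exact mul_div_cancel₀ _ h

theorem rpow_mul_rpow_one_sub (hp : p ∈ wedge C) (ρ : ℝ) :
    p.1 ^ ρ * p.2 ^ (1 - ρ) = p.2 * (p.1 / p.2) ^ ρ := by
  rcases hp.2.1.eq_or_lt with h | h
  · rw [fst_eq_zero_of_snd_eq_zero hp h.symm, ← h]
    rcases eq_or_ne ρ 0 with rfl | hρ
    · simp
    · simp [zero_rpow hρ]
  · rw [div_rpow hp.1 h.le, rpow_sub h, rpow_one]
    field_simp

theorem convexOn_rpow_mul_rpow {ρ : ℝ} (hρ : 1 ≤ ρ) (C : ℝ) :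
    ConvexOn ℝ (wedge C) fun p => p.1 ^ ρ * p.2 ^ (1 - ρ) := by
  refine ⟨convex_wedge C, fun p hp q hq a b ha hb hab => ?_⟩
  have hm := convex_wedge C hp hq ha hb hab
  simp only [smul_eq_mul]
  rw [rpow_mul_rpow_one_sub hp, rpow_mul_rpow_one_sub hq, rpow_mul_rpow_one_sub hm]
  simp only [Prod.fst_add, Prod.snd_add, Prod.smul_fst, Prod.smul_snd, smul_eq_mul]
  have hp' : 0 ≤ p.1 / p.2 := div_nonneg hp.1 hp.2.1
  have hq' : 0 ≤ q.1 / q.2 := div_nonneg hq.1 hq.2.1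
  have hp₂ := hp.2.1
  have hq₂ := hq.2.1
  rcases (by positivity : 0 ≤ a * p.2 + b * q.2).eq_or_lt with hB | hB
  · rw [← hB, zero_mul]
    positivity
  -- Jensen for `t ↦ t ^ ρ` at `p.1 / p.2`, `q.1 / q.2` with weights `a p.2 / B`, `b q.2 / B`,
  -- where `B = a p.2 + b q.2`.
  have hJ := (convexOn_rpow hρ).2 hp' hq' (by positivity : 0 ≤ a * p.2 / (a * p.2 + b * q.2))
    (by positivity : 0 ≤ b * q.2 / (a * p.2 + b * q.2)) (by field_simp)
  simp only [smul_eq_mul] at hJ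
  calc (a * p.2 + b * q.2) * ((a * p.1 + b * q.1) / (a * p.2 + b * q.2)) ^ ρ
      = (a * p.2 + b * q.2) * (a * p.2 / (a * p.2 + b * q.2) * (p.1 / p.2)
          + b * q.2 / (a * p.2 + b * q.2) * (q.1 / q.2)) ^ ρ := by
        rw [← snd_mul_fst_div_snd hp, ← snd_mul_fst_div_snd hq]
        field_simp
    _ ≤ (a * p.2 + b * q.2) * (a * p.2 / (a * p.2 + b * q.2) * (p.1 / p.2) ^ ρ
          + b * q.2 / (a * p.2 + b * q.2) * (q.1 / q.2) ^ ρ) :=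
        mul_le_mul_of_nonneg_left hJ hB.le
    _ = a * (p.2 * (p.1 / p.2) ^ ρ) + b * (q.2 * (q.1 / q.2) ^ ρ) := by
        field_simp

theorem continuousOn_rpow_mul_rpow {ρ C : ℝ} (hρ : 0 ≤ ρ) (hC : 0 ≤ C) :
    ContinuousOn (fun p : ℝ × ℝ => p.1 ^ ρ * p.2 ^ (1 - ρ)) (wedge C) := by
  intro p hp
  rcases hp.2.1.eq_or_lt with h | h
  · have hbound : ∀ q ∈ wedge C, q.1 ^ ρ * q.2 ^ (1 - ρ) ≤ C ^ ρ * q.2 := by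
      intro q hq
      rw [rpow_mul_rpow_one_sub hq, mul_comm (C ^ ρ)]
      exact mul_le_mul_of_nonneg_left (rpow_le_rpow (div_nonneg hq.1 hq.2.1)
        (div_le_of_le_mul₀ hq.2.1 hC hq.2.2) hρ) hq.2.1
    have hlim : Tendsto (fun q : ℝ × ℝ => C ^ ρ * q.2) (𝓝[wedge C] p) (𝓝 0) := by
      have := ((continuous_snd.const_mul (C ^ ρ)).tendsto p).mono_left
        (nhdsWithin_le_nhds (s := wedge C))
      simpa [← h] using this
    rw [ContinuousWithinAt, rpow_mul_rpow_one_sub hp, ← h, zero_mul]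
    refine squeeze_zero' (eventually_nhdsWithin_of_forall fun q hq => ?_)
      (eventually_nhdsWithin_of_forall hbound) hlim
    rw [rpow_mul_rpow_one_sub hq]
    exact mul_nonneg hq.2.1 (rpow_nonneg (div_nonneg hq.1 hq.2.1) _)
  · exact ((continuous_fst.continuousAt.rpow_const (Or.inr hρ)).mul
      (continuous_snd.continuousAt.rpow_const (Or.inl h.ne'))).continuousWithinAt

end wedge

section

variable {E ι : Type*}

theorem convexOn_finset_sum [AddCommGroup E] [Module ℝ E] {s : Set E} (hs : Convex ℝ s)
    (t : Finset ι) {f : ι → E → ℝ} (hf : ∀ i ∈ t, ConvexOn ℝ s (f i)) :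
    ConvexOn ℝ s fun x => ∑ i ∈ t, f i x := by
  classical
  induction t using Finset.induction_on with
  | empty => simpa using convexOn_const (0 : ℝ) hs
  | insert i t hi ih =>
    simp_rw [Finset.sum_insert hi]
    exact (hf i (Finset.mem_insert_self i t)).add
      (ih fun j hj => hf j (Finset.mem_insert_of_mem hj))

theorem convexOn_sum_rpow_mul_rpow [AddCommGroup E] [Module ℝ E] [Fintype ι] {s : Set E}
    {ρ C : ℝ} (hs : Convex ℝ s) (hρ : 1 ≤ ρ) (a b : ι → E →ₗ[ℝ] ℝ)
    (hab : ∀ i, ∀ x ∈ s, (a i x, b i x) ∈ wedge C) :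
    ConvexOn ℝ s fun x => ∑ i, a i x ^ ρ * b i x ^ (1 - ρ) :=
  convexOn_finset_sum hs _ fun i _ =>
    ((wedge.convexOn_rpow_mul_rpow hρ C).comp_linearMap ((a i).prod (b i))).subset
      (fun x hx => hab i x hx) hs

theorem continuousOn_sum_rpow_mul_rpow [TopologicalSpace E] [Fintype ι] {s : Set E} {ρ C : ℝ}
    (hρ : 0 ≤ ρ) (hC : 0 ≤ C) {a b : ι → E → ℝ} (ha : ∀ i, Continuous (a i))
    (hb : ∀ i, Continuous (b i))
    (hab : ∀ i, ∀ x ∈ s, (a i x, b i x) ∈ wedge C) :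
    ContinuousOn (fun x => ∑ i, a i x ^ ρ * b i x ^ (1 - ρ)) s :=
  continuousOn_finsetSum _ fun i _ =>
    (wedge.continuousOn_rpow_mul_rpow hρ hC).comp ((ha i).prodMk (hb i)).continuousOn
      (fun x hx => hab i x hx)

theorem ConvexOn.exists_isMaxOn_mem_extremePoints [AddCommGroup E] [Module ℝ E]
    [TopologicalSpace E] [T2Space E] [IsTopologicalAddGroup E] [ContinuousSMul ℝ E]
    [LocallyConvexSpace ℝ E] {s : Set E}
    {f : E → ℝ} (hf : ConvexOn ℝ s f) (hfc : ContinuousOn f s) (hs : IsCompact s)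
    (hne : s.Nonempty) : ∃ x ∈ s.extremePoints ℝ, IsMaxOn f s x := by
  obtain ⟨x₀, hx₀, hmax⟩ := hs.exists_isMaxOn hne hfc
  have hM : IsClosed (s ∩ f ⁻¹' Ici (f x₀)) :=
    hfc.preimage_isClosed_of_isClosed hs.isClosed isClosed_Ici
  have hMext : IsExtreme ℝ s (s ∩ f ⁻¹' Ici (f x₀)) := by
    refine ⟨inter_subset_left, fun x₁ hx₁ x₂ hx₂ x ⟨_, hx⟩ ⟨a, b, ha, hb, hab, hx_eq⟩ => ?_⟩
    subst hx_eq
    exact ⟨hx₁, hx.trans (hf.le_left_of_right_le' hx₁ hx₂ ha hb.le hab ((hmax hx₂).trans hx))⟩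
  obtain ⟨x, hx⟩ := (hs.of_isClosed_subset hM inter_subset_left).extremePoints_nonempty
    ⟨x₀, hx₀, le_refl (f x₀)⟩
  exact ⟨x, hMext.extremePoints_subset_extremePoints hx,
    fun y hy => show f y ≤ f x from (hmax hy).trans hx.1.2⟩

end

theorem ncard_support_le_finrank_of_mem_extremePoints {X V : Type*} [Fintype X]
    [AddCommGroup V] [Module ℝ V] [FiniteDimensional ℝ V] (Φ : (X → ℝ) →ₗ[ℝ] V) (v : V)
    {e : X → ℝ} (he : e ∈ (Ici 0 ∩ Φ ⁻¹' {v}).extremePoints ℝ) :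
    (Function.support e).ncard ≤ finrank ℝ V := by
  classical
  by_contra! hlt
  set T := Function.support e
  -- A nonzero direction `u`, supported on `T`, along which `Φ` is constant.
  obtain ⟨w, hw, hw0⟩ := Submodule.exists_mem_ne_zero_of_ne_bot <|
    LinearMap.ker_ne_bot_of_finrank_lt
      (f := Φ ∘ₗ Function.ExtendByZero.linearMap ℝ ((↑) : T → X))
      (by rwa [finrank_fintype_fun_eq_card, Fintype.card_eq_nat_card, Nat.card_coe_set_eq])
  set u := Function.extend ((↑) : T → X) w 0
  have hΦu : Φ u = 0 := hw
  have hu0 : u ≠ 0 := fun h => hw0 <| funext fun y => by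
    simpa [u, Subtype.val_injective.extend_apply] using congrFun h y
  have hu_supp : ∀ x, e x = 0 → u x = 0 := fun x hx =>
    Function.extend_apply' _ _ _ (by rintro ⟨y, rfl⟩; exact y.2 hx)
  have hmem : ∀ᶠ t in 𝓝 (0 : ℝ), e + t • u ∈ Ici 0 ∩ Φ ⁻¹' {v} := by
    refine Filter.Eventually.and ?_ (Filter.Eventually.of_forall fun t => ?_)
    · simp only [mem_Ici, Pi.le_def, Pi.add_apply, Pi.smul_apply, smul_eq_mul, Pi.zero_apply]
      refine Filter.eventually_all.2 fun x => ?_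
      rcases (he.1.1 x).eq_or_lt with hx | hx
      · exact Filter.Eventually.of_forall fun t => by simp [hu_supp x hx.symm, ← hx]
      · have : Tendsto (fun t : ℝ => e x + t * u x) (𝓝 0) (𝓝 (e x)) :=
          Continuous.tendsto' (by fun_prop) _ _ (by simp)
        exact (this.eventually (lt_mem_nhds hx)).mono fun t ht => ht.le
    · simpa [hΦu] using he.1.2
  have hmem_neg : ∀ᶠ t in 𝓝 (0 : ℝ), e + (-t) • u ∈ Ici 0 ∩ Φ ⁻¹' {v} :=
    (continuous_neg.tendsto' (0 : ℝ) 0 neg_zero).eventually hmem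
  obtain ⟨t, ⟨hplus, hminus⟩, ht0⟩ :=
    (((hmem.and hmem_neg).filter_mono nhdsWithin_le_nhds).and self_mem_nhdsWithin).exists
      (f := 𝓝[≠] (0 : ℝ))
  have := he.2 hplus hminus ⟨1/2, 1/2, by norm_num, by norm_num, by norm_num, by module⟩
  simp [hu0, show t ≠ 0 from ht0] at this


section SDPI

variable {X Y : Type*} [Fintype X] [Fintype Y]

def simplexSlice (c : X → ℝ) : Set (X → ℝ) :=
  {q | (∀ x, 0 ≤ q x) ∧ (∑ x, q x = 1) ∧ ∑ x, c x * q x = 1}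

noncomputable def sdpiObjective (ρ lam : ℝ) (c : X → ℝ) (W : X → Y → ℝ) (q : X → ℝ) : ℝ :=
  (∑ y, (∑ x, c x * q x * W x y) ^ ρ * (∑ x, q x * W x y) ^ (1 - ρ))
    - (∑ x, c x ^ ρ * q x) ^ lam

theorem simplexSlice_eq (c : X → ℝ) :
    simplexSlice c =
      Ici 0 ∩ ((dotProductBilin ℝ ℝ 1).prod (dotProductBilin ℝ ℝ c)) ⁻¹' {(1, 1)} := by
  ext q; simp [simplexSlice, dotProduct, Pi.le_def, mul_comm]

theorem simplexSlice_subset_Ici (c : X → ℝ) : simplexSlice c ⊆ Ici 0 :=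
  fun _ hq => hq.1

theorem convex_simplexSlice (c : X → ℝ) : Convex ℝ (simplexSlice c) :=
  simplexSlice_eq c ▸ (convex_Ici 0).inter ((convex_singleton _).linear_preimage _)

theorem isCompact_simplexSlice (c : X → ℝ) : IsCompact (simplexSlice c) := by
  refine (isCompact_stdSimplex ℝ X).of_isClosed_subset ?_ fun q hq => ⟨hq.1, hq.2.1⟩
  rw [simplexSlice_eq]
  exact isClosed_Ici.inter
    (isClosed_singleton.preimage (LinearMap.continuous_of_finiteDimensional _))

theorem ncard_support_le_two_of_mem_extremePoints_simplexSlice {c q : X → ℝ}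
    (hq : q ∈ (simplexSlice c).extremePoints ℝ) : {x | q x ≠ 0}.ncard ≤ 2 := by
  rw [simplexSlice_eq] at hq
  exact (ncard_support_le_finrank_of_mem_extremePoints _ _ hq).trans_eq (by simp)

theorem sdpiObjective_eq (ρ lam : ℝ) (c : X → ℝ) (W : X → Y → ℝ) :
    sdpiObjective ρ lam c W = fun q =>
      ∑ y, dotProductBilin ℝ ℝ (fun x => c x * W x y) q ^ ρ
          * dotProductBilin ℝ ℝ (fun x => W x y) q ^ (1 - ρ)
        - dotProductBilin ℝ ℝ (fun x => c x ^ ρ) q ^ lam := by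
  funext q; simp [sdpiObjective, dotProduct, mul_comm, mul_left_comm]

theorem dotProduct_mem_wedge {c w q : X → ℝ} (hc : ∀ x, 0 ≤ c x) (hw : ∀ x, 0 ≤ w x)
    (hq : 0 ≤ q) : ((fun x => c x * w x) ⬝ᵥ q, w ⬝ᵥ q) ∈ wedge (∑ x, c x) := by
  have hwq : ∀ x, 0 ≤ w x * q x := fun x => mul_nonneg (hw x) (hq x)
  simp only [wedge, mem_ofPred_eq, dotProduct, Finset.mul_sum, mul_assoc]
  exact ⟨Finset.sum_nonneg fun x _ => mul_nonneg (hc x) (hwq x),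
    Finset.sum_nonneg fun x _ => hwq x, Finset.sum_le_sum fun x _ =>
      mul_le_mul_of_nonneg_right (Finset.single_le_sum (fun i _ => hc i) (Finset.mem_univ x))
        (hwq x)⟩

variable {ρ lam : ℝ} {c : X → ℝ} {W : X → Y → ℝ}

theorem convexOn_sdpiObjective (hρ : 1 ≤ ρ) (hlam₀ : 0 ≤ lam) (hlam₁ : lam ≤ 1)
    (hc : ∀ x, 0 ≤ c x) (hW : ∀ x y, 0 ≤ W x y) :
    ConvexOn ℝ (Ici 0) (sdpiObjective ρ lam c W) := by
  rw [sdpiObjective_eq]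
  exact (convexOn_sum_rpow_mul_rpow (convex_Ici 0) hρ _ _
    fun y q hq => dotProduct_mem_wedge hc (hW · y) hq).sub
    (((concaveOn_rpow hlam₀ hlam₁).comp_linearMap _).subset
      (fun q hq => Finset.sum_nonneg fun x _ => mul_nonneg (rpow_nonneg (hc x) ρ) (hq x))
      (convex_Ici 0))

theorem continuousOn_sdpiObjective (hρ : 0 ≤ ρ) (hlam : 0 ≤ lam)
    (hc : ∀ x, 0 ≤ c x) (hW : ∀ x y, 0 ≤ W x y) :
    ContinuousOn (sdpiObjective ρ lam c W) (Ici 0) := by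
  rw [sdpiObjective_eq]
  exact (continuousOn_sum_rpow_mul_rpow hρ (Finset.sum_nonneg fun x _ => hc x)
    (fun _ => LinearMap.continuous_of_finiteDimensional _)
    (fun _ => LinearMap.continuous_of_finiteDimensional _)
    fun y q hq => dotProduct_mem_wedge hc (hW · y) hq).sub
    ((LinearMap.continuous_of_finiteDimensional _).rpow_const fun _ => Or.inr hlam).continuousOn

end SDPI

theorem stmt_17_general {X Y : Type*} [Fintype X] [Fintype Y]
    (ρ lam : ℝ) (hρ : 1 < ρ) (hlam : lam ∈ Set.Ioo (0 : ℝ) 1)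
    (W : X → Y → ℝ) (hW : ∀ x y, 0 ≤ W x y)
    (P₀ P₁ : X → ℝ) (h0 : ∀ x, 0 < P₀ x) (h1 : ∀ x, 0 < P₁ x)
    (hs0 : ∑ x, P₀ x = 1) (hs1 : ∑ x, P₁ x = 1)
    (S : Set (X → ℝ))
    (hS : S = {q | (∀ x, 0 ≤ q x) ∧ (∑ x, q x = 1) ∧ ∑ x, (P₀ x / P₁ x) * q x = 1})
    (g : (X → ℝ) → ℝ)
    (hg : ∀ q, g q =
        (∑ y, (∑ x, (P₀ x / P₁ x) * q x * W x y) ^ ρ * (∑ x, q x * W x y) ^ (1 - ρ))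
          - (∑ x, (P₀ x / P₁ x) ^ ρ * q x) ^ lam) :
    ConvexOn ℝ S g ∧
      ∃ q' ∈ Set.extremePoints ℝ S, Set.ncard {x | q' x ≠ 0} ≤ 2 ∧ ∀ q ∈ S, g q ≤ g q' := by
  set c : X → ℝ := fun x => P₀ x / P₁ x
  have hc : ∀ x, 0 ≤ c x := fun x => (div_pos (h0 x) (h1 x)).le
  obtain rfl : S = simplexSlice c := hS
  obtain rfl : g = sdpiObjective ρ lam c W := funext hg
  have hconvex := (convexOn_sdpiObjective hρ.le hlam.1.le hlam.2.le hc hW).subset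
    (simplexSlice_subset_Ici c) (convex_simplexSlice c)
  have hP₁ : P₁ ∈ simplexSlice c :=
    ⟨fun x => (h1 x).le, hs1, by simpa [c, div_mul_cancel₀ _ (h1 _).ne'] using hs0⟩
  obtain ⟨q', hq', hmax⟩ := hconvex.exists_isMaxOn_mem_extremePoints
    ((continuousOn_sdpiObjective (zero_le_one.trans hρ.le) hlam.1.le hc hW).mono
      (simplexSlice_subset_Ici c))
    (isCompact_simplexSlice c) ⟨P₁, hP₁⟩
  exact ⟨hconvex, q', hq', ncard_support_le_two_of_mem_extremePoints_simplexSlice hq', hmax⟩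

/-- For ρ ∈ (1,∞), λ ∈ (0,1), a channel W : X → Y, and P₀ ≪≫ P₁, the
function g on S(P₀,P₁) defined by
g(P̂₁) = Σ_y (Σ_x (P₀(x)/P₁(x)) P̂₁(x) W(y|x))^ρ (Σ_x P̂₁(x) W(y|x))^{1−ρ}
        − (Σ_x (P₀(x)/P₁(x))^ρ P̂₁(x))^λ
is convex on S(P₀,P₁), and hence attains its maximum at an extreme point of S(P₀,P₁),
which is supported on at most two atoms. -/
theorem stmt_17 {X Y : Type*} [Fintype X] [Fintype Y]
    (ρ lam : ℝ) (hρ : 1 < ρ) (hlam : lam ∈ Set.Ioo (0 : ℝ) 1)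
    (W : X → Y → ℝ) (hW : ∀ x y, 0 ≤ W x y) (hWrow : ∀ x, ∑ y, W x y = 1)
    (P₀ P₁ : X → ℝ) (h0 : ∀ x, 0 < P₀ x) (h1 : ∀ x, 0 < P₁ x)
    (hs0 : ∑ x, P₀ x = 1) (hs1 : ∑ x, P₁ x = 1)
    (S : Set (X → ℝ))
    (hS : S = {q | (∀ x, 0 ≤ q x) ∧ (∑ x, q x = 1) ∧ ∑ x, (P₀ x / P₁ x) * q x = 1})
    (g : (X → ℝ) → ℝ)
    (hg : ∀ q, g q =
        (∑ y, (∑ x, (P₀ x / P₁ x) * q x * W x y) ^ ρ * (∑ x, q x * W x y) ^ (1 - ρ))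
          - (∑ x, (P₀ x / P₁ x) ^ ρ * q x) ^ lam) :
    ConvexOn ℝ S g ∧
      ∃ q' ∈ Set.extremePoints ℝ S, Set.ncard {x | q' x ≠ 0} ≤ 2 ∧ ∀ q ∈ S, g q ≤ g q' :=
  stmt_17_general ρ lam hρ hlam W hW P₀ P₁ h0 h1 hs0 hs1 S hS g hg
end
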